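/- arXiv:2504.17032 — 2 statements merged into one kernel-verified Lean document; each statement's English description precedes it below -/
import Mathlib

section
/- For every x ∈ ℝ, ∫_{−∞}^{∞} F_β(x + u)·(sin(αu)/u)²·e^{−2iαu} du = (1/2)·e^{iβ}·Σ_{n=1}^{N} a_n·w_α(λ_n)·e^{iλ_n x}, where w_α(t) = (π/2)·max(0, 2α − |t − 2α|). -/
open Real Filter Finset MeasureTheory

/-! The kernel `(sin (α u) / u) ^ 2` is, after the scaling `u = 2π v`, a multiple of the Fourier
transform of the triangle function `ξ ↦ max 0 (2α - |ξ|)`, so Fourier inversion gives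
`∫ (sin (α u) / u) ^ 2 e^{itu} du = (π / 2) max 0 (2α - |t|)`. Writing each cosine as
`(e^{iθ} + e^{-iθ}) / 2` reduces the theorem to this formula at `t = λ - 2α` and
`t = -(λ + 2α)`; the second value vanishes because `λ ≥ 0`. -/

open FourierTransform

lemma sin_mul_div_sq_le (a u : ℝ) : (sin (a * u) / u) ^ 2 ≤ (a ^ 2 + 1) * (1 + u ^ 2)⁻¹ := by
  rcases eq_or_ne u 0 with rfl | hu
  · simp only [div_zero, ne_eq, OfNat.ofNat_ne_zero, not_false_eq_true, zero_pow]
    positivity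
  rw [div_pow, div_le_iff₀ (by positivity), mul_assoc, inv_mul_eq_div, ← mul_div_assoc,
    le_div_iff₀ (by positivity)]
  nlinarith [sin_sq_le_sq (x := a * u), sin_sq_le_one (a * u), sq_nonneg u, sq_nonneg (a * u)]

lemma integrable_sin_mul_div_sq (a : ℝ) : Integrable fun u : ℝ ↦ (sin (a * u) / u) ^ 2 := by
  refine (integrable_inv_one_add_sq.const_mul (a ^ 2 + 1)).mono'
    (by fun_prop : Measurable _).aestronglyMeasurable (ae_of_all _ fun u ↦ ?_)
  rw [norm_of_nonneg (sq_nonneg _)]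
  exact sin_mul_div_sq_le a u

lemma integrable_sin_mul_div_sq_mul_cexp (a t : ℝ) :
    Integrable fun u : ℝ ↦
      (((sin (a * u) / u) ^ 2 : ℝ) : ℂ) * Complex.exp ((t * u : ℝ) * Complex.I) :=
  (integrable_sin_mul_div_sq a).ofReal.mul_bdd (by fun_prop)
    (ae_of_all _ fun u ↦ (Complex.norm_exp_ofReal_mul_I _).le)

noncomputable def triangle (r ξ : ℝ) : ℂ := ((max 0 (r - |ξ|) : ℝ) : ℂ)

lemma continuous_triangle (r : ℝ) : Continuous (triangle r) := by
  unfold triangle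
  fun_prop

lemma triangle_eq_zero_of_notMem_Icc {r ξ : ℝ} (hξ : ξ ∉ Set.Icc (-r) r) :
    triangle r ξ = 0 := by
  rw [Set.mem_Icc, ← abs_le, not_le] at hξ
  simp [triangle, hξ.le]

lemma integrable_triangle (r : ℝ) : Integrable (triangle r) :=
  (continuous_triangle r).integrable_of_hasCompactSupport <|
    HasCompactSupport.intro isCompact_Icc fun _ ↦ triangle_eq_zero_of_notMem_Icc

lemma integral_affine_mul_cexp {c : ℂ} (hc : c ≠ 0) (A B : ℂ) (s t : ℝ) :
    ∫ v in s..t, (A + B * v) * Complex.exp (c * v) =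
      Complex.exp (c * t) * ((A + B * t) / c - B / c ^ 2) -
        Complex.exp (c * s) * ((A + B * s) / c - B / c ^ 2) := by
  have hderiv (v : ℝ) :
      HasDerivAt (fun v : ℝ ↦ Complex.exp (c * v) * ((A + B * v) / c - B / c ^ 2))
        ((A + B * v) * Complex.exp (c * v)) v := by
    have hid : HasDerivAt (fun v : ℝ ↦ (v : ℂ)) 1 v := (hasDerivAt_id v).ofReal_comp
    refine ((hid.const_mul c).cexp.mul (((hid.const_mul B).const_add A).div_const c
      |>.sub_const (B / c ^ 2))).congr_deriv ?_
    field_simp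
    ring
  exact intervalIntegral.integral_eq_sub_of_hasDerivAt (fun v _ ↦ hderiv v)
    (Continuous.intervalIntegrable (by fun_prop) _ _)

lemma integral_cexp_mul_triangle {r : ℝ} (hr : 0 ≤ r) {c : ℂ} (hc : c ≠ 0) :
    ∫ v : ℝ, Complex.exp (c * v) * triangle r v =
      (Complex.exp (c * r) + Complex.exp (-(c * r)) - 2) / c ^ 2 := by
  have hcont : Continuous fun v : ℝ ↦ Complex.exp (c * v) * triangle r v := by
    have := continuous_triangle r
    fun_prop
  have hleft : ∫ v in -r..0, Complex.exp (c * v) * triangle r v =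
      ∫ v in -r..0, ((r : ℂ) + 1 * v) * Complex.exp (c * v) := by
    refine intervalIntegral.integral_congr fun v hv ↦ ?_
    rw [Set.uIcc_of_le (by linarith)] at hv
    simp only [triangle, abs_of_nonpos hv.2, max_eq_right (by linarith [hv.1] : (0 : ℝ) ≤ r - -v)]
    push_cast
    ring
  have hright : ∫ v in (0 : ℝ)..r, Complex.exp (c * v) * triangle r v =
      ∫ v in (0 : ℝ)..r, ((r : ℂ) + (-1) * v) * Complex.exp (c * v) := by
    refine intervalIntegral.integral_congr fun v hv ↦ ?_
    rw [Set.uIcc_of_le hr] at hv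
    simp only [triangle, abs_of_nonneg hv.1, max_eq_right (by linarith [hv.2] : (0 : ℝ) ≤ r - v)]
    push_cast
    ring
  rw [← setIntegral_eq_integral_of_forall_compl_eq_zero fun v hv ↦ by
      rw [triangle_eq_zero_of_notMem_Icc hv, mul_zero],
    integral_Icc_eq_integral_Ioc, ← intervalIntegral.integral_of_le (by linarith),
    ← intervalIntegral.integral_add_adjacent_intervals (b := 0) (hcont.intervalIntegrable _ _)
      (hcont.intervalIntegrable _ _), hleft, hright, integral_affine_mul_cexp hc,
    integral_affine_mul_cexp hc]
  push_cast
  field_simp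
  simp only [mul_zero, Complex.exp_zero]
  ring_nf

lemma fourier_triangle {r : ℝ} (hr : 0 ≤ r) {u : ℝ} (hu : u ≠ 0) :
    𝓕 (triangle r) u = ((sin (π * r * u) ^ 2 / (π ^ 2 * u ^ 2) : ℝ) : ℂ) := by
  set c : ℂ := ((-2 * π * u : ℝ) : ℂ) * Complex.I with hc_def
  have hc : c ≠ 0 := mul_ne_zero (by exact_mod_cast (by positivity : -2 * π * u ≠ 0))
    Complex.I_ne_zero
  have hc_sq : c ^ 2 = -4 * (π : ℂ) ^ 2 * (u : ℂ) ^ 2 := by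
    rw [hc_def, mul_pow, Complex.I_sq]
    push_cast
    ring
  have hexp : Complex.exp (c * r) + Complex.exp (-(c * r)) - 2 =
      -4 * Complex.sin (π * r * u) ^ 2 := by
    have hcr : c * r = -(2 * (π * r * u : ℂ)) * Complex.I := by
      rw [hc_def]
      push_cast
      ring
    rw [hcr, neg_mul, neg_neg, ← neg_mul, add_comm, ← Complex.two_cos, Complex.cos_two_mul]
    linear_combination 4 * Complex.sin_sq_add_cos_sq (π * r * u : ℂ)
  rw [Real.fourier_real_eq_integral_exp_smul]
  simp_rw [smul_eq_mul, show ∀ v : ℝ, ((-2 * π * v * u : ℝ) : ℂ) * Complex.I = c * v from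
    fun v ↦ by rw [hc_def]; push_cast; ring]
  rw [integral_cexp_mul_triangle hr hc, hexp, hc_sq]
  have hπ : (π : ℂ) ≠ 0 := by exact_mod_cast pi_ne_zero
  have hu' : (u : ℂ) ≠ 0 := by exact_mod_cast hu
  push_cast
  field_simp

theorem integral_sin_mul_div_sq_mul_cexp {α : ℝ} (hα : 0 ≤ α) (t : ℝ) :
    ∫ u : ℝ, (((sin (α * u) / u) ^ 2 : ℝ) : ℂ) * Complex.exp ((t * u : ℝ) * Complex.I) =
      ((π / 2 * max 0 (2 * α - |t|) : ℝ) : ℂ) := by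
  set g : ℝ → ℂ := fun v ↦ ((sin (π * (2 * α) * v) ^ 2 / (π ^ 2 * v ^ 2) : ℝ) : ℂ) with hg_def
  have hFg : 𝓕 (triangle (2 * α)) =ᵐ[volume] g := by
    filter_upwards [volume.ae_ne 0] with v hv
    exact fourier_triangle (by positivity) hv
  have hg : Integrable g := by
    have hg_eq : (fun v : ℝ ↦ sin (π * (2 * α) * v) ^ 2 / (π ^ 2 * v ^ 2)) =
        fun v ↦ (π ^ 2)⁻¹ * (sin (π * (2 * α) * v) / v) ^ 2 := by
      ext v
      ring
    exact (hg_eq ▸ (integrable_sin_mul_div_sq _).const_mul _).ofReal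
  have hinv : 𝓕⁻ g t = triangle (2 * α) t := by
    rw [fourierInv_eq_fourier_neg, ← fourier_congr_ae hFg, ← fourierInv_eq_fourier_neg,
      (continuous_triangle _).fourierInv_fourier_eq (integrable_triangle _) (hg.congr hFg.symm)]
  calc _ = (2 * π) • ∫ v : ℝ, (((sin (α * (2 * π * v)) / (2 * π * v)) ^ 2 : ℝ) : ℂ) *
          Complex.exp ((t * (2 * π * v) : ℝ) * Complex.I) := by
        rw [Measure.integral_comp_mul_left (fun u : ℝ ↦ (((sin (α * u) / u) ^ 2 : ℝ) : ℂ) *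
          Complex.exp ((t * u : ℝ) * Complex.I)), smul_smul, abs_of_pos (by positivity),
          mul_inv_cancel₀ (by positivity), one_smul]
    _ = (π / 2 : ℂ) * 𝓕⁻ g t := by
        rw [Real.fourierInv_eq', ← integral_const_mul, Complex.real_smul, ← integral_const_mul]
        congr 1
        ext v
        rw [smul_eq_mul, RCLike.inner_apply, conj_trivial, hg_def,
          show α * (2 * π * v) = π * (2 * α) * v by ring, mul_comm t]
        rcases eq_or_ne v 0 with rfl | hv
        · simp
        push_cast
        field_simp
    _ = _ := by
        rw [hinv, triangle]
        push_cast
        ring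

lemma cos_mul_sin_mul_div_sq_mul_cexp_eq (α lam x β : ℝ) :
    (fun u : ℝ ↦ ((cos (lam * (x + u) + β) : ℝ) : ℂ) * (((sin (α * u) / u) ^ 2 : ℝ) : ℂ) *
        Complex.exp (-(2 * α * u : ℝ) * Complex.I)) =
      fun u ↦ Complex.exp ((lam * x + β : ℝ) * Complex.I) / 2 *
          ((((sin (α * u) / u) ^ 2 : ℝ) : ℂ) *
            Complex.exp (((lam - 2 * α) * u : ℝ) * Complex.I)) +
        Complex.exp (-(lam * x + β : ℝ) * Complex.I) / 2 *
          ((((sin (α * u) / u) ^ 2 : ℝ) : ℂ) *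
            Complex.exp ((-(lam + 2 * α) * u : ℝ) * Complex.I)) := by
  ext u
  set θ : ℂ := ((lam * (x + u) + β : ℝ) : ℂ)
  have hcos : ((cos (lam * (x + u) + β) : ℝ) : ℂ) =
      (Complex.exp (θ * Complex.I) + Complex.exp (-θ * Complex.I)) / 2 := by
    rw [Complex.ofReal_cos, ← Complex.two_cos]
    ring
  have hplus : Complex.exp ((lam * x + β : ℝ) * Complex.I) *
      Complex.exp (((lam - 2 * α) * u : ℝ) * Complex.I) =
        Complex.exp (θ * Complex.I) * Complex.exp (-(2 * α * u : ℝ) * Complex.I) := by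
    rw [← Complex.exp_add, ← Complex.exp_add]
    push_cast [θ]
    ring_nf
  have hminus : Complex.exp (-(lam * x + β : ℝ) * Complex.I) *
      Complex.exp ((-(lam + 2 * α) * u : ℝ) * Complex.I) =
        Complex.exp (-θ * Complex.I) * Complex.exp (-(2 * α * u : ℝ) * Complex.I) := by
    rw [← Complex.exp_add, ← Complex.exp_add]
    push_cast [θ]
    ring_nf
  rw [hcos]
  linear_combination (-(((sin (α * u) / u) ^ 2 : ℝ) : ℂ) / 2) * (hplus + hminus)

lemma integrable_cos_mul_sin_mul_div_sq_mul_cexp (α lam x β : ℝ) :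
    Integrable fun u : ℝ ↦ ((cos (lam * (x + u) + β) : ℝ) : ℂ) *
      (((sin (α * u) / u) ^ 2 : ℝ) : ℂ) * Complex.exp (-(2 * α * u : ℝ) * Complex.I) := by
  rw [cos_mul_sin_mul_div_sq_mul_cexp_eq]
  exact ((integrable_sin_mul_div_sq_mul_cexp _ _).const_mul _).add
    ((integrable_sin_mul_div_sq_mul_cexp _ _).const_mul _)

lemma integral_cos_mul_sin_mul_div_sq_mul_cexp {α lam : ℝ} (hα : 0 ≤ α) (hlam : 0 ≤ lam)
    (x β : ℝ) :
    ∫ u : ℝ, ((cos (lam * (x + u) + β) : ℝ) : ℂ) * (((sin (α * u) / u) ^ 2 : ℝ) : ℂ) *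
        Complex.exp (-(2 * α * u : ℝ) * Complex.I) =
      1 / 2 * Complex.exp ((β : ℂ) * Complex.I) *
        (((π / 2 * max 0 (2 * α - |lam - 2 * α|) : ℝ) : ℂ) *
          Complex.exp ((lam * x : ℝ) * Complex.I)) := by
  have hfar : max 0 (2 * α - |-(lam + 2 * α)|) = 0 := by
    rw [abs_neg, abs_of_nonneg (by positivity)]
    simpa using hlam
  rw [cos_mul_sin_mul_div_sq_mul_cexp_eq, integral_add
      ((integrable_sin_mul_div_sq_mul_cexp _ _).const_mul _)
      ((integrable_sin_mul_div_sq_mul_cexp _ _).const_mul _),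
    integral_const_mul, integral_const_mul, integral_sin_mul_div_sq_mul_cexp hα,
    integral_sin_mul_div_sq_mul_cexp hα, hfar, mul_zero, Complex.ofReal_zero, mul_zero, add_zero,
    Complex.ofReal_add, add_mul, Complex.exp_add]
  ring

theorem convolution_formula_general (α β : ℝ) (hα : 0 < α) (N : ℕ)
    (lam a : ℕ → ℝ) (hlam : ∀ n ∈ Finset.Icc 1 N, 0 < lam n) (x : ℝ) :
    (∫ u : ℝ,
        (((∑ n ∈ Finset.Icc 1 N, a n * Real.cos (lam n * (x + u) + β)) : ℝ) : ℂ)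
          * (((Real.sin (α * u) / u) ^ 2 : ℝ) : ℂ)
          * Complex.exp (-(2 * α * u : ℝ) * Complex.I))
      = (1 / 2) * Complex.exp ((β : ℂ) * Complex.I) *
          ∑ n ∈ Finset.Icc 1 N, (a n : ℂ)
            * ((Real.pi / 2 * max 0 (2 * α - |lam n - 2 * α|) : ℝ) : ℂ)
            * Complex.exp ((lam n * x : ℝ) * Complex.I) := by
  have hsum (u : ℝ) :
      (((∑ n ∈ Finset.Icc 1 N, a n * cos (lam n * (x + u) + β)) : ℝ) : ℂ) *
          (((sin (α * u) / u) ^ 2 : ℝ) : ℂ) * Complex.exp (-(2 * α * u : ℝ) * Complex.I) =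
        ∑ n ∈ Finset.Icc 1 N, (a n : ℂ) * (((cos (lam n * (x + u) + β) : ℝ) : ℂ) *
          (((sin (α * u) / u) ^ 2 : ℝ) : ℂ) * Complex.exp (-(2 * α * u : ℝ) * Complex.I)) := by
    rw [Complex.ofReal_sum, Finset.sum_mul, Finset.sum_mul]
    refine Finset.sum_congr rfl fun n _ ↦ ?_
    rw [Complex.ofReal_mul]
    ring
  simp_rw [hsum]
  rw [integral_finsetSum _ fun n _ ↦
      (integrable_cos_mul_sin_mul_div_sq_mul_cexp α (lam n) x β).const_mul (a n : ℂ),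
    Finset.mul_sum]
  refine Finset.sum_congr rfl fun n hn ↦ ?_
  rw [integral_const_mul, integral_cos_mul_sin_mul_div_sq_mul_cexp hα.le (hlam n hn).le]
  ring

theorem convolution_formula (α β : ℝ) (hα : 0 < α) (N : ℕ) (hN : 0 < N)
    (lam a : ℕ → ℝ) (hlam : ∀ n ∈ Finset.Icc 1 N, 0 < lam n) (x : ℝ) :
    (∫ u : ℝ,
        (((∑ n ∈ Finset.Icc 1 N, a n * Real.cos (lam n * (x + u) + β)) : ℝ) : ℂ)
          * (((Real.sin (α * u) / u) ^ 2 : ℝ) : ℂ)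
          * Complex.exp (-(2 * α * u : ℝ) * Complex.I))
      = (1 / 2) * Complex.exp ((β : ℂ) * Complex.I) *
          ∑ n ∈ Finset.Icc 1 N, (a n : ℂ)
            * ((Real.pi / 2 * max 0 (2 * α - |lam n - 2 * α|) : ℝ) : ℂ)
            * Complex.exp ((lam n * x : ℝ) * Complex.I) :=
  convolution_formula_general α β hα N lam a hlam x
end

section
/- For every real x, |R(x)|² ≤ exp(2·|𝓜|/C₁). -/
/-! Since `λ / (2α) ≥ C₁ / 2`, each factor of `R` has modulus at least `1 - e^{-u}` with
`u = C₁ / 2 ∈ (0, 1]`, so it suffices that `1 - e^{-u} ≥ u e^{-u/2} ≥ e^{-1/(2u)}`.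
Both inequalities are `sinh t ≥ t`: the first at `t = u / 2`, the second at `t = -log u`. -/

open Real Filter Finset

/-- The resonator `R(x) = ∏_{λ ∈ 𝓜} (1 − e^{−λ/(2α)} e^{iλx})⁻¹`. -/
noncomputable def resonator (α : ℝ) (𝓜 : Finset ℝ) (x : ℝ) : ℂ :=
  ∏ l ∈ 𝓜, (1 - (Real.exp (-l / (2 * α)) : ℂ) * Complex.exp ((l * x : ℝ) * Complex.I))⁻¹

namespace Real

theorem sub_inv_le_two_mul_log {u : ℝ} (hu : 0 < u) (hu1 : u ≤ 1) : u - u⁻¹ ≤ 2 * log u := by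
  have hsinh : -log u ≤ sinh (-log u) :=
    self_le_sinh_iff.2 (neg_nonneg.2 (log_nonpos hu.le hu1))
  rw [sinh_eq, neg_neg, exp_neg, exp_log hu] at hsinh
  linarith

theorem mul_exp_neg_half_le_one_sub_exp_neg {u : ℝ} (hu : 0 ≤ u) :
    u * exp (-(u / 2)) ≤ 1 - exp (-u) := by
  have hsinh : u / 2 ≤ sinh (u / 2) := self_le_sinh_iff.2 (by positivity)
  have hsplit : 1 - exp (-u) = 2 * sinh (u / 2) * exp (-(u / 2)) := by
    have hinv : exp (u / 2) * exp (-(u / 2)) = 1 := by rw [← exp_add, add_neg_cancel, exp_zero]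
    have hsq : exp (-u) = exp (-(u / 2)) * exp (-(u / 2)) := by rw [← exp_add]; ring_nf
    rw [sinh_eq]
    linear_combination -hinv - hsq
  rw [hsplit]
  gcongr
  linarith

theorem exp_neg_inv_le_one_sub_exp_neg_half {c : ℝ} (hc : 0 < c) (hc2 : c ≤ 2) :
    exp (-c⁻¹) ≤ 1 - exp (-(c / 2)) :=
  calc exp (-c⁻¹) ≤ exp (log (c / 2) - c / 2 / 2) := by
        gcongr
        have := sub_inv_le_two_mul_log (u := c / 2) (by positivity) (by linarith)
        field_simp at this ⊢
        linarith
    _ = c / 2 * exp (-(c / 2 / 2)) := by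
        rw [sub_eq_add_neg, exp_add, exp_log (by positivity)]
    _ ≤ 1 - exp (-(c / 2)) := mul_exp_neg_half_le_one_sub_exp_neg (by positivity)

end Real

theorem norm_inv_one_sub_le {𝕜 : Type*} [NormedDivisionRing 𝕜] {z : 𝕜} (hz : ‖z‖ < 1) :
    ‖(1 - z)⁻¹‖ ≤ (1 - ‖z‖)⁻¹ := by
  rw [norm_inv]
  have h := norm_sub_norm_le (1 : 𝕜) z
  rw [norm_one] at h
  exact inv_anti₀ (by linarith) h

theorem norm_resonator_factor_le {α C₁ l : ℝ} (hα : 0 < α) (hC₁ : 0 < C₁) (hC₁2 : C₁ ≤ 2)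
    (hl : C₁ * α ≤ l) (x : ℝ) :
    ‖(1 - (exp (-l / (2 * α)) : ℂ) * Complex.exp ((l * x : ℝ) * Complex.I))⁻¹‖ ≤ exp C₁⁻¹ := by
  set z : ℂ := (exp (-l / (2 * α)) : ℂ) * Complex.exp ((l * x : ℝ) * Complex.I)
  have hnorm : ‖z‖ = exp (-l / (2 * α)) := by
    rw [norm_mul, Complex.norm_exp_ofReal_mul_I, mul_one, Complex.norm_real,
      norm_of_nonneg (exp_pos _).le]
  have hdecay : ‖z‖ ≤ exp (-(C₁ / 2)) := by
    rw [hnorm]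
    gcongr
    rw [div_le_iff₀ (by positivity)]
    linarith
  have hgap : exp (-C₁⁻¹) ≤ 1 - ‖z‖ := by
    linarith [exp_neg_inv_le_one_sub_exp_neg_half hC₁ hC₁2]
  calc ‖(1 - z)⁻¹‖ ≤ (1 - ‖z‖)⁻¹ := norm_inv_one_sub_le (by linarith [exp_pos (-C₁⁻¹)])
    _ ≤ (exp (-C₁⁻¹))⁻¹ := inv_anti₀ (exp_pos _) hgap
    _ = exp C₁⁻¹ := by rw [exp_neg, inv_inv]

theorem resonator_sup_bound (α C₁ : ℝ) (hα : 0 < α) (hC₁ : 0 < C₁) (hC₁2 : C₁ ≤ 2)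
    (𝓜 : Finset ℝ) (h𝓜 : ∀ l ∈ 𝓜, C₁ * α ≤ l) (x : ℝ) :
    ‖resonator α 𝓜 x‖ ^ 2 ≤ Real.exp (2 * 𝓜.card / C₁) := by
  have hnorm : ‖resonator α 𝓜 x‖ ≤ exp C₁⁻¹ ^ 𝓜.card := by
    rw [resonator, norm_prod]
    exact (prod_le_prod (fun _ _ => norm_nonneg _) fun l hl =>
      norm_resonator_factor_le hα hC₁ hC₁2 (h𝓜 l hl) x).trans_eq (prod_const _)
  calc ‖resonator α 𝓜 x‖ ^ 2 ≤ (exp C₁⁻¹ ^ 𝓜.card) ^ 2 := by gcongr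
    _ = exp (2 * 𝓜.card / C₁) := by
        rw [← exp_nat_mul, ← exp_nat_mul]
        push_cast
        ring_nf
end
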